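/- Let ξ₁, …, ξ_N be distinct positive real numbers and let Ξ be the N×N diagonal matrix with entries ξ_i. Then for any distinct natural numbers k₁, …, k_N, the matrices Ξ^{k₁}, …, Ξ^{k_N} are linearly independent in the space of N×N matrices. -/

import Mathlib

/-!
A vanishing combination `∑ⱼ cⱼ Ξ^{kⱼ}` says that the polynomial `∑ⱼ cⱼ X^{kⱼ}` has the `N`
distinct positive roots `ξᵢ`. By Descartes' rule of signs a nonzero polynomial has at most as many
positive roots as sign changes in its coefficients, hence fewer than its number of terms, which is
at most `N`.
-/

open Finset Polynomial

namespace Polynomial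

theorem signVariations_lt_card_support {R : Type*} [Semiring R] [LinearOrder R] {P : R[X]}
    (hP : P ≠ 0) : signVariations P < #P.support := by
  by_cases hlead : P.eraseLead = 0
  · have hmono : P = monomial P.natDegree P.leadingCoeff := by
      simpa [hlead] using (eraseLead_add_monomial_natDegree_leadingCoeff P).symm
    calc signVariations P = 0 := by rw [hmono, signVariations_monomial]
      _ < #P.support := card_pos.mpr (support_nonempty.mpr hP)
  · calc signVariations P ≤ signVariations P.eraseLead + 1 := signVariations_le_eraseLead_succ P
      _ < #P.eraseLead.support + 1 := by gcongr; exact signVariations_lt_card_support hlead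
      _ = #P.support := card_support_eraseLead_add_one hP
termination_by #P.support
decreasing_by exact eraseLead_support_card_lt hP

theorem card_lt_card_support_of_forall_pos_isRoot {R : Type*} [CommRing R] [LinearOrder R]
    [IsStrictOrderedRing R] {P : R[X]} (hP : P ≠ 0) {s : Finset R}
    (hs : ∀ x ∈ s, 0 < x ∧ P.IsRoot x) : #s < #P.support := by
  have hle : s.val ≤ P.roots :=
    (Multiset.le_iff_subset s.nodup).mpr fun x hx => (mem_roots hP).mpr (hs x hx).2
  calc #s = s.val.countP (0 < ·) := (Multiset.countP_eq_card.mpr fun x hx => (hs x hx).1).symm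
    _ ≤ P.roots.countP (0 < ·) := Multiset.countP_le_of_le _ hle
    _ ≤ signVariations P := roots_countP_pos_le_signVariations P
    _ < #P.support := signVariations_lt_card_support hP

end Polynomial

theorem linearIndependent_pow_of_pos {ι κ R : Type*} [Fintype ι] [Fintype κ] [CommRing R]
    [LinearOrder R] [IsStrictOrderedRing R] {ξ : ι → R} {k : κ → ℕ} (hpos : ∀ i, 0 < ξ i)
    (hξ : Function.Injective ξ) (hk : Function.Injective k)
    (hcard : Fintype.card κ ≤ Fintype.card ι) :
    LinearIndependent R (fun j i => ξ i ^ k j) := by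
  classical
  rw [Fintype.linearIndependent_iff]
  intro c hc
  set P : R[X] := ∑ j, monomial (k j) (c j)
  have hcoeff : ∀ j, P.coeff (k j) = c j := fun j => by
    simp [P, coeff_monomial, hk.eq_iff]
  have hroot : ∀ i, P.IsRoot (ξ i) := fun i => by
    simpa [P, eval_finsetSum, mul_comm] using congrFun hc i
  have hsupport : P.support ⊆ univ.image k := fun n hn => by
    by_contra hn'
    refine mem_support_iff.mp hn ?_
    simp only [mem_image, mem_univ, true_and, not_exists] at hn'
    simp [P, coeff_monomial, hn']
  have hP : P = 0 := by
    by_contra hP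
    have hroots : ∀ x ∈ univ.image ξ, 0 < x ∧ P.IsRoot x := by
      rintro _ hx
      obtain ⟨i, -, rfl⟩ := mem_image.mp hx
      exact ⟨hpos i, hroot i⟩
    have hlt : Fintype.card ι < Fintype.card κ :=
      calc Fintype.card ι = #(univ.image ξ) := by rw [card_image_of_injective _ hξ, card_univ]
        _ < #P.support := card_lt_card_support_of_forall_pos_isRoot hP hroots
        _ ≤ #(univ.image k) := card_le_card hsupport
        _ ≤ Fintype.card κ := card_image_le.trans_eq card_univ
    exact hlt.not_ge hcard
  intro j
  rw [← hcoeff j, hP, coeff_zero]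

/-- For Ξ = diag(ξ₁,…,ξ_N) with distinct positive real entries and distinct
natural numbers k₁,…,k_N, the matrix powers Ξ^{kⱼ} are linearly independent. -/
theorem diagonal_powers_linearIndependent (N : ℕ) (ξ : Fin N → ℝ) (k : Fin N → ℕ)
    (hpos : ∀ i, 0 < ξ i) (hdist : Function.Injective ξ)
    (hk : Function.Injective k) :
    LinearIndependent ℝ (fun j : Fin N => (Matrix.diagonal ξ) ^ (k j)) := by
  have hdiag : LinearMap.ker (Matrix.diagonalLinearMap (Fin N) ℝ ℝ) = ⊥ :=
    LinearMap.ker_eq_bot.mpr Matrix.diagonal_injective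
  have hpowers : (fun j => Matrix.diagonal ξ ^ k j) =
      Matrix.diagonalLinearMap (Fin N) ℝ ℝ ∘ fun j i => ξ i ^ k j := by
    funext j
    simp [Matrix.diagonal_pow, Pi.pow_def]
  rw [hpowers]
  exact (linearIndependent_pow_of_pos hpos hdist hk le_rfl).map' _ hdiag
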